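/- Let M be a real r × n matrix of rank r with columns m₁, …, mₙ, none of which is the zero vector, let h and k be positive integers with h ≤ r, and set d = r − h. Define the distance space (X, ρ) with X = {p₀, …, p_k} ∪ {x₁, …, xₙ} (all k + 1 + n points distinct) by: ρ(pᵢ, pⱼ) = 0 for all i, j ∈ {0,…,k}; ρ(pᵢ, xⱼ) = ‖mⱼ‖₂ for all i ∈ {0,…,k} and j ∈ {1,…,n}; and ρ(xᵢ, xⱼ) = ‖mᵢ − mⱼ‖₂ for all distinct i, j ∈ {1,…,n}. Then there exists a set C of at most k column indices such that the matrix M' obtained from M by deleting the columns in C satisfies rank(M') ≤ r − h if and only if there exists a set O ⊆ X with |O| ≤ k such that (X \ O, ρ) is d-embeddable. -/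

import Mathlib

/-- `(X, ρ)` is a distance space: `ρ` is symmetric, nonnegative and vanishes on the
diagonal on the points of `X`. -/
def IsDistance {α : Type*} (X : Finset α) (ρ : α → α → ℝ) : Prop :=
  (∀ x ∈ X, ∀ y ∈ X, ρ x y = ρ y x) ∧ (∀ x ∈ X, ∀ y ∈ X, 0 ≤ ρ x y) ∧ (∀ x ∈ X, ρ x x = 0)

/-- `(X, ρ)` is isometrically embeddable into `ℝ^d`. -/
def IsEmbeddable {α : Type*} (X : Finset α) (ρ : α → α → ℝ) (d : ℕ) : Prop :=
  ∃ φ : α → EuclideanSpace ℝ (Fin d), ∀ x ∈ X, ∀ y ∈ X, ρ x y = dist (φ x) (φ y)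

/-- `(X, ρ)` is strongly `d`-embeddable: `d`-embeddable but (for `d ≥ 1`)
not `(d-1)`-embeddable. -/
def IsStronglyEmbeddable {α : Type*} (X : Finset α) (ρ : α → α → ℝ) (d : ℕ) : Prop :=
  IsEmbeddable X ρ d ∧ (0 < d → ¬ IsEmbeddable X ρ (d - 1))

/-- A nonempty set `Y` with `|Y| = r + 1` is independent if `(Y, ρ)` is strongly
`r`-embeddable. -/
def IsIndependent {α : Type*} (Y : Finset α) (ρ : α → α → ℝ) : Prop :=
  Y.Nonempty ∧ IsStronglyEmbeddable Y ρ (Y.card - 1)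

/-- The `j`-th column of `M`, viewed as a point of Euclidean space `ℝ^r`. -/
noncomputable def col {r n : ℕ} (M : Matrix (Fin r) (Fin n) ℝ) (j : Fin n) : EuclideanSpace ℝ (Fin r) :=
  (WithLp.equiv 2 (Fin r → ℝ)).symm (fun i => M i j)

/-- The distance space of the rank-reduction reduction: points `p₀, …, p_k` (modelled
as `Sum.inl a`) and `x₁, …, xₙ` (modelled as `Sum.inr j`, corresponding to the column
`mⱼ` of `M`). -/
noncomputable def rhoRank {r n : ℕ} (M : Matrix (Fin r) (Fin n) ℝ) (k : ℕ) :
    (Fin (k + 1) ⊕ Fin n) → (Fin (k + 1) ⊕ Fin n) → ℝ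
  | Sum.inl _, Sum.inl _ => 0
  | Sum.inl _, Sum.inr j => ‖col M j‖
  | Sum.inr j, Sum.inl _ => ‖col M j‖
  | Sum.inr i, Sum.inr j => dist (col M i) (col M j)

/-! Every point `pₐ` can be placed at the origin, so once some `pₐ` survives the removal of `O`
(there are `k + 1 > |O|` of them), an embedding of `X \ O` into `ℝ^d` is the same as a family of
vectors of `ℝ^d` with the norms and mutual distances of the surviving columns `mⱼ`. By
polarization such a family has the Gram matrix of those columns, hence spans a space of the same
dimension, which is the rank of the matrix they form; conversely, columns spanning a space of
dimension at most `d` are mapped into `ℝ^d` by a linear isometry of their span. -/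

open Finset Module Submodule
open Matrix hiding col

section Gram

variable {𝕜 E F ι : Type*} [RCLike 𝕜] [NormedAddCommGroup E] [InnerProductSpace 𝕜 E]
  [NormedAddCommGroup F] [InnerProductSpace 𝕜 F] [Fintype ι]

theorem norm_fintypeLinearCombination_eq_of_gram_eq {u : ι → E} {v : ι → F}
    (h : gram 𝕜 u = gram 𝕜 v) (c : ι → 𝕜) :
    ‖Fintype.linearCombination 𝕜 u c‖ = ‖Fintype.linearCombination 𝕜 v c‖ := by
  have hinner := congrArg (star c ⬝ᵥ · *ᵥ c) h
  simp only [star_dotProduct_gram_mulVec] at hinner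
  simp only [Fintype.linearCombination_apply, @norm_eq_sqrt_re_inner 𝕜, hinner]

theorem finrank_span_eq_of_gram_eq {u : ι → E} {v : ι → F} (h : gram 𝕜 u = gram 𝕜 v) :
    finrank 𝕜 (span 𝕜 (Set.range u)) = finrank 𝕜 (span 𝕜 (Set.range v)) := by
  have hker : LinearMap.ker (Fintype.linearCombination 𝕜 u) =
      LinearMap.ker (Fintype.linearCombination 𝕜 v) := by
    ext c
    rw [LinearMap.mem_ker, LinearMap.mem_ker, ← norm_eq_zero,
      norm_fintypeLinearCombination_eq_of_gram_eq h, norm_eq_zero]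
  have hu := LinearMap.finrank_range_add_finrank_ker (Fintype.linearCombination 𝕜 u)
  have hv := LinearMap.finrank_range_add_finrank_ker (Fintype.linearCombination 𝕜 v)
  rw [Fintype.range_linearCombination] at hu hv
  rw [hker] at hu
  omega

end Gram

theorem gram_eq_of_norm_eq_of_dist_eq {E F ι : Type*} [NormedAddCommGroup E]
    [InnerProductSpace ℝ E] [NormedAddCommGroup F] [InnerProductSpace ℝ F]
    {u : ι → E} {v : ι → F} (hnorm : ∀ i, ‖u i‖ = ‖v i‖)
    (hdist : ∀ i j, dist (u i) (u j) = dist (v i) (v j)) : gram ℝ u = gram ℝ v := by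
  ext i j
  simp only [gram_apply, real_inner_eq_norm_mul_self_add_norm_mul_self_sub_norm_sub_mul_self_div_two,
    ← dist_eq_norm, hnorm, hdist]

theorem exists_linearIsometry_euclideanSpace_of_finrank_le {𝕜 V : Type*} [RCLike 𝕜]
    [NormedAddCommGroup V] [InnerProductSpace 𝕜 V] [FiniteDimensional 𝕜 V] {d : ℕ}
    (hd : finrank 𝕜 V ≤ d) : Nonempty (V →ₗᵢ[𝕜] EuclideanSpace 𝕜 (Fin d)) := by
  let b := (stdOrthonormalBasis 𝕜 V).toBasis
  let e : Fin (finrank 𝕜 V) → EuclideanSpace 𝕜 (Fin d) :=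
    fun i => EuclideanSpace.single (Fin.castLE hd i) 1
  have he : Orthonormal 𝕜 e := EuclideanSpace.orthonormal_single.comp _ (Fin.castLE_injective hd)
  have hbe : (b.constr 𝕜 e) ∘ b = e := funext (b.constr_basis 𝕜 e)
  rw [← hbe] at he
  exact ⟨(b.constr 𝕜 e).isometryOfOrthonormal (by simp [b]) he⟩

theorem exists_euclideanSpace_realization_iff_finrank_span_le {E ι : Type*} [Fintype ι]
    [NormedAddCommGroup E] [InnerProductSpace ℝ E] (u : ι → E) (d : ℕ) :
    (∃ v : ι → EuclideanSpace ℝ (Fin d),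
        (∀ i, ‖v i‖ = ‖u i‖) ∧ ∀ i j, dist (v i) (v j) = dist (u i) (u j)) ↔
      finrank ℝ (span ℝ (Set.range u)) ≤ d := by
  constructor
  · rintro ⟨v, hnorm, hdist⟩
    rw [← finrank_span_eq_of_gram_eq (gram_eq_of_norm_eq_of_dist_eq hnorm hdist)]
    exact (Submodule.finrank_le _).trans (finrank_euclideanSpace_fin (𝕜 := ℝ)).le
  · intro hd
    have := FiniteDimensional.span_of_finite ℝ (Set.finite_range u)
    obtain ⟨L⟩ := exists_linearIsometry_euclideanSpace_of_finrank_le hd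
    let w : ι → span ℝ (Set.range u) := fun i => ⟨u i, subset_span (Set.mem_range_self i)⟩
    exact ⟨L ∘ w, fun i => L.norm_map (w i), fun i j => L.dist_map (w i) (w j)⟩

theorem rank_submatrix_eq_finrank_span_col {r n : ℕ} {ι : Type*} [Fintype ι]
    (M : Matrix (Fin r) (Fin n) ℝ) (f : ι → Fin n) :
    (M.submatrix id f).rank = finrank ℝ (span ℝ (Set.range fun i => col M (f i))) := by
  let e := (WithLp.linearEquiv 2 ℝ (Fin r → ℝ)).symm
  rw [rank_eq_finrank_span_cols, ← e.finrank_map_eq, Submodule.map_span, ← Set.range_comp]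
  rfl

section RhoRank

variable {r n k d : ℕ} (M : Matrix (Fin r) (Fin n) ℝ)

theorem exists_inl_notMem_of_card_le {O : Finset (Fin (k + 1) ⊕ Fin n)} (hO : #O ≤ k) :
    ∃ a, Sum.inl a ∉ O := by
  have hcard : #O.toLeft < #(univ : Finset (Fin (k + 1))) := by
    rw [card_univ, Fintype.card_fin]
    exact Nat.lt_succ_of_le (card_toLeft_le.trans hO)
  obtain ⟨a, -, ha⟩ := exists_mem_notMem_of_card_lt_card hcard
  exact ⟨a, mem_toLeft.not.1 ha⟩

theorem isEmbeddable_rhoRank_iff {O : Finset (Fin (k + 1) ⊕ Fin n)} (hO : ∃ a, Sum.inl a ∉ O) :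
    IsEmbeddable (univ \ O) (rhoRank M k) d ↔
      ∃ v : {j // j ∉ O.toRight} → EuclideanSpace ℝ (Fin d),
        (∀ j, ‖v j‖ = ‖col M j‖) ∧ ∀ i j, dist (v i) (v j) = dist (col M i) (col M j) := by
  constructor
  · rintro ⟨φ, hφ⟩
    obtain ⟨a, ha⟩ := hO
    have hp : Sum.inl a ∈ univ \ O := by simpa using ha
    have hx (j : {j // j ∉ O.toRight}) : Sum.inr (j : Fin n) ∈ univ \ O := by
      simpa using j.2
    refine ⟨fun j => φ (Sum.inr j) - φ (Sum.inl a), fun j => ?_, fun i j => ?_⟩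
    · rw [← dist_eq_norm, ← hφ _ (hx j) _ hp]
      rfl
    · rw [dist_sub_right, ← hφ _ (hx i) _ (hx j)]
      rfl
  · rintro ⟨v, hnorm, hdist⟩
    classical
    let ψ : Fin n → EuclideanSpace ℝ (Fin d) := fun j => if h : j ∈ O.toRight then 0 else v ⟨j, h⟩
    refine ⟨Sum.elim 0 ψ, ?_⟩
    rintro (a | i) hi (b | j) hj <;> simp only [mem_sdiff, mem_univ, true_and] at hi hj
    · simp [rhoRank]
    · simp [rhoRank, ψ, hj, ← hnorm ⟨j, _⟩]
    · simp [rhoRank, ψ, hi, ← hnorm ⟨i, _⟩]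
    · simp [rhoRank, ψ, hi, hj, ← hdist ⟨i, _⟩ ⟨j, _⟩]

end RhoRank

theorem stmt13_general (r n k h : ℕ)
    (M : Matrix (Fin r) (Fin n) ℝ) :
    (∃ C : Finset (Fin n), C.card ≤ k ∧
        (M.submatrix id (fun j : {j : Fin n // j ∉ C} => (j : Fin n))).rank ≤ r - h) ↔
      ∃ O : Finset (Fin (k + 1) ⊕ Fin n), O.card ≤ k ∧
        IsEmbeddable (Finset.univ \ O) (rhoRank M k) (r - h) := by
  simp only [rank_submatrix_eq_finrank_span_col,
    ← exists_euclideanSpace_realization_iff_finrank_span_le]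
  constructor
  · rintro ⟨C, hCk, hC⟩
    refine ⟨(∅ : Finset (Fin (k + 1))).disjSum C, by simpa using hCk, ?_⟩
    rwa [isEmbeddable_rhoRank_iff M ⟨0, by simp⟩, toRight_disjSum]
  · rintro ⟨O, hOk, hO⟩
    refine ⟨O.toRight, card_toRight_le.trans hOk, ?_⟩
    rwa [← isEmbeddable_rhoRank_iff M (exists_inl_notMem_of_card_le hOk)]

/-- one can delete at most `k` columns of `M` to reduce its rank to at
most `r - h` iff the distance space `rhoRank` admits at most `k` outliers whose removal
makes it `(r - h)`-embeddable. -/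
theorem stmt13 (r n k h : ℕ) (hh : 1 ≤ h) (hk : 1 ≤ k) (hhr : h ≤ r)
    (M : Matrix (Fin r) (Fin n) ℝ) (hrank : M.rank = r)
    (hcols : ∀ j : Fin n, col M j ≠ 0) :
    (∃ C : Finset (Fin n), C.card ≤ k ∧
        (M.submatrix id (fun j : {j : Fin n // j ∉ C} => (j : Fin n))).rank ≤ r - h) ↔
      ∃ O : Finset (Fin (k + 1) ⊕ Fin n), O.card ≤ k ∧
        IsEmbeddable (Finset.univ \ O) (rhoRank M k) (r - h) :=
  stmt13_general r n k h M
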